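/- The linear map on E^3_{9,5} defined by the diagonal matrix diag(1,1,2,3,4,5,6,7,5) with respect to the basis {X_0,...,X_8} (i.e. f(X_0)=X_0, f(X_1)=X_1, f(X_i)=iX_i for i=2,...,7, f(X_8)=5X_8) is a derivation. -/

import Mathlib

open Finset

/-- The `k`-th standard basis vector of `ℂⁿ` (zero if `k ≥ n`). -/
noncomputable def E (n k : ℕ) : Fin n → ℂ := fun t => if (t : ℕ) = k then 1 else 0

/-- The bilinear bracket on `ℂⁿ` determined by structure constants `s`, antisymmetrized:
`[e_i, e_j] = s i j - s j i`. -/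
noncomputable def brkt (n : ℕ) (s : ℕ → ℕ → Fin n → ℂ) (x y : Fin n → ℂ) : Fin n → ℂ :=
  ∑ i : Fin n, ∑ j : Fin n, (x i * y j) • (s (i : ℕ) (j : ℕ) - s (j : ℕ) (i : ℕ))

/-- Structure constants common to `E¹_{9,5}`, `E²_{9,5}`, `E³_{9,5}`, with parameters
`p, q, r, s` giving the coefficients of `X₇` in `[X₁,X₆]`, `[X₂,X₅]`, `[X₂,X₈]`, `[X₃,X₄]`:
`E¹ = sE95 3 (-1) (-3) 0`, `E² = sE95 1 1 (-1) (-2)`, `E³ = sE95 0 2 0 (-3)`. -/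
noncomputable def sE95 (p q r s : ℂ) : ℕ → ℕ → Fin 9 → ℂ := fun i j =>
  (if i = 0 ∧ 1 ≤ j ∧ j ≤ 6 then E 9 (j + 1) else 0) +
  (if i = 0 ∧ j = 8 then E 9 6 else 0) +
  (if i = 1 ∧ j = 4 then E 9 8 else 0) +
  (if i = 1 ∧ j = 5 then (2 : ℂ) • E 9 6 else 0) +
  (if i = 2 ∧ j = 3 then -E 9 8 else 0) +
  (if i = 2 ∧ j = 4 then -E 9 6 else 0) +
  (if i = 1 ∧ j = 6 then p • E 9 7 else 0) +
  (if i = 2 ∧ j = 5 then q • E 9 7 else 0) +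
  (if i = 2 ∧ j = 8 then r • E 9 7 else 0) +
  (if i = 3 ∧ j = 4 then s • E 9 7 else 0)

/-- The diagonal map `diag(1,1,2,3,4,5,6,7,5)` on `E³_{9,5}`. -/
noncomputable def dE95 (x : Fin 9 → ℂ) : Fin 9 → ℂ := fun t =>
  (if (t : ℕ) = 0 then 1 else if (t : ℕ) = 8 then 5 else ((t : ℕ) : ℂ)) * x t

open Module.End

/-!
A diagonal map `diag(w)` satisfies the Leibniz rule for a bracket as soon as every structure
constant `[X_i, X_j]` is a weight vector of weight `w_i + w_j`. For the weights
`1, 1, 2, 3, 4, 5, 6, 7, 5` this holds bracket by bracket in the whole family `sE95 p q r s`,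
e.g. `[X_0, X_8] = X_6` has weight `1 + 5` and `[X_2, X_3] = -X_8` has weight `2 + 3`.
-/

noncomputable def diagEnd (n : ℕ) (w : ℕ → ℂ) : Module.End ℂ (Fin n → ℂ) :=
  Matrix.toLin' (Matrix.diagonal fun t : Fin n => w t)

lemma diagEnd_apply (n : ℕ) (w : ℕ → ℂ) (x : Fin n → ℂ) (t : Fin n) :
    diagEnd n w x t = w t * x t := by
  simp [diagEnd, Matrix.toLin'_apply, Matrix.mulVec_diagonal]

lemma E_mem_eigenspace_diagEnd (n : ℕ) (w : ℕ → ℂ) (k : ℕ) :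
    E n k ∈ eigenspace (diagEnd n w) (w k) := by
  rw [mem_eigenspace_iff]
  funext t
  by_cases h : (t : ℕ) = k <;> simp [diagEnd_apply, E, h]

lemma ite_mem_of_imp {M S : Type*} [AddCommMonoid M] [SetLike S M] [ZeroMemClass S M] {s : S}
    {p : Prop} [Decidable p] {v : M} (h : p → v ∈ s) : (if p then v else 0) ∈ s :=
  ite_mem.2 ⟨h, fun _ => zero_mem s⟩

theorem diagEnd_brkt_of_mem_eigenspace (n : ℕ) (w : ℕ → ℂ)
    (s : ℕ → ℕ → Fin n → ℂ) (hs : ∀ i j : Fin n, s i j ∈ eigenspace (diagEnd n w) (w i + w j))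
    (x y : Fin n → ℂ) :
    diagEnd n w (brkt n s x y)
      = brkt n s (diagEnd n w x) y + brkt n s x (diagEnd n w y) := by
  simp only [brkt, map_sum, map_smul, map_sub, diagEnd_apply, ← sum_add_distrib]
  refine sum_congr rfl fun i _ => sum_congr rfl fun j _ => ?_
  rw [mem_eigenspace_iff.1 (hs i j), mem_eigenspace_iff.1 (hs j i)]
  module

noncomputable def wE95 (k : ℕ) : ℂ := if k = 0 then 1 else if k = 8 then 5 else k

lemma dE95_eq_diagEnd (x : Fin 9 → ℂ) : dE95 x = diagEnd 9 wE95 x := by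
  funext t
  simp [dE95, diagEnd_apply, wE95]

lemma sE95_mem_eigenspace (p q r s : ℂ) (i j : ℕ) :
    sE95 p q r s i j ∈ eigenspace (diagEnd 9 wE95) (wE95 i + wE95 j) := by
  have hE : ∀ k a b, wE95 k = wE95 a + wE95 b →
      E 9 k ∈ eigenspace (diagEnd 9 wE95) (wE95 a + wE95 b) :=
    fun k a b h => h ▸ E_mem_eigenspace_diagEnd 9 wE95 k
  unfold sE95
  repeat refine add_mem ?_ ?_
  all_goals refine ite_mem_of_imp ?_
  · rintro ⟨rfl, h1, h6⟩
    apply hE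
    interval_cases j <;> norm_num [wE95]
  all_goals
    rintro ⟨rfl, rfl⟩
    apply_rules [Submodule.smul_mem, neg_mem, hE]
    norm_num [wE95]

/-- `diag(1,1,2,3,4,5,6,7,5)` is a derivation of `E³_{9,5}`. -/
theorem stmt_14 :
    ∀ x y : Fin 9 → ℂ,
      dE95 (brkt 9 (sE95 0 2 0 (-3)) x y)
        = brkt 9 (sE95 0 2 0 (-3)) (dE95 x) y + brkt 9 (sE95 0 2 0 (-3)) x (dE95 y) := by
  intro x y
  simp only [dE95_eq_diagEnd]
  exact diagEnd_brkt_of_mem_eigenspace 9 wE95 _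
    (fun i j => sE95_mem_eigenspace 0 2 0 (-3) i j) x y
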